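/- For a stable linear system, PE of the state trajectory is independent of the initial condition: let x_{t+1} = A x_t + B u_t with A Schur and u bounded, and let x, x' be the trajectories from initial conditions x_0 and x_0' under the same input u. Then x is persistently exciting if and only if x' is persistently exciting. -/

import Mathlib

open Matrix

noncomputable def gramSum {ι : Type} [Fintype ι] (w : ℕ → ι → ℝ) (t T : ℕ) :
    Matrix ι ι ℝ :=
  ∑ τ ∈ Finset.Icc t (t + T), Matrix.vecMulVec (w τ) (w τ)

/-- Persistency of excitation of a discrete-time signal. -/
def IsPE {ι : Type} [Fintype ι] [DecidableEq ι] (w : ℕ → ι → ℝ) : Prop :=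
  ∃ α : ℝ, 0 < α ∧ ∃ T : ℕ, 0 < T ∧ ∀ t : ℕ, (gramSum w t T - α • 1).PosSemidef

/-- Partial persistency of excitation of degree `D'`: some surjective linear map
makes the signal persistently exciting. -/
def IsPPE {ι : Type} [Fintype ι] [DecidableEq ι] (w : ℕ → ι → ℝ) (D' : ℕ) : Prop :=
  ∃ P : (ι → ℝ) →ₗ[ℝ] (Fin D' → ℝ), Function.Surjective P ∧ IsPE (fun t => P (w t))

/-- The multi-shift stack `Q^k(w)_t = (w_{t-k+1}, …, w_t)` with zero padding. -/
def Qstack (k : ℕ) {d : ℕ} (w : ℕ → Fin d → ℝ) : ℕ → Fin k × Fin d → ℝ :=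
  fun t p => if k - 1 - (p.1 : ℕ) ≤ t then w (t - (k - 1 - (p.1 : ℕ))) p.2 else 0

/-- `A` is Schur: all complex eigenvalues lie strictly inside the unit disc. -/
def IsSchur {n : ℕ} (A : Matrix (Fin n) (Fin n) ℝ) : Prop :=
  ∀ μ : ℂ, μ ∈ spectrum ℂ (A.map (algebraMap ℝ ℂ)) → ‖μ‖ < 1

/-- Reachability of the pair `(A, B)`: the controllability matrix has full row rank. -/
def IsReachable {n m : ℕ} (A : Matrix (Fin n) (Fin n) ℝ)
    (B : Matrix (Fin n) (Fin m) ℝ) : Prop :=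
  (Matrix.of fun (i : Fin n) (p : Fin n × Fin m) =>
    ((A ^ (p.1 : ℕ)) * B) i p.2).rank = n

/-!
Two trajectories driven by the same input differ by `A ^ t *ᵥ (x 0 - x' 0)`, and `A ^ t → 0`
because Gelfand's formula gives `‖A ^ t‖ ≤ ρ ^ t` for any `ρ` strictly between the spectral radius
and `1`. Persistency of excitation survives perturbations that tend to zero: from
`(a ⬝ᵥ v)² ≤ 2 (b ⬝ᵥ v)² + 2 ((a - b) ⬝ᵥ v)²`, on a window beyond the time after which the
perturbation is small the perturbed signal keeps a quarter of the excitation level, and lengthening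
the windows by that time makes the bound uniform.
-/

open Filter Topology

theorem tendsto_pow_atTop_nhds_zero_of_spectralRadius_lt_one {A : Type*} [NormedRing A]
    [NormedAlgebra ℂ A] [CompleteSpace A] {a : A} (h : spectralRadius ℂ a < 1) :
    Tendsto (a ^ ·) atTop (𝓝 0) := by
  obtain ⟨ρ, hρa, hρ1⟩ := ENNReal.lt_iff_exists_nnreal_btwn.mp h
  have hgelfand := spectrum.pow_nnnorm_pow_one_div_tendsto_nhds_spectralRadius a
  have hpow : ∀ᶠ n : ℕ in atTop, ‖a ^ n‖₊ ≤ ρ ^ n := by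
    filter_upwards [hgelfand.eventually_lt_const hρa, eventually_gt_atTop 0] with n hn hn0
    rw [one_div, ← ENNReal.coe_rpow_of_nonneg _ (by positivity), ENNReal.coe_lt_coe,
      NNReal.rpow_inv_lt_iff (by positivity), NNReal.rpow_natCast] at hn
    exact hn.le
  rw [tendsto_zero_iff_norm_tendsto_zero]
  refine squeeze_zero' (.of_forall fun _ => norm_nonneg _) (hpow.mono fun n hn => ?_)
    (tendsto_pow_atTop_nhds_zero_of_lt_one ρ.coe_nonneg (by exact_mod_cast hρ1))
  exact_mod_cast hn

section LinftyOpNorm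

attribute [local instance] Matrix.linftyOpNormedRing Matrix.linftyOpNormedAlgebra

theorem IsSchur.tendsto_pow {n : ℕ} {A : Matrix (Fin n) (Fin n) ℝ} (hA : IsSchur A) :
    Tendsto (A ^ ·) atTop (𝓝 0) := by
  rcases isEmpty_or_nonempty (Fin n) with hn | hn
  · exact tendsto_const_nhds.congr fun _ => Subsingleton.elim _ _
  have : CompleteSpace (Matrix (Fin n) (Fin n) ℂ) := FiniteDimensional.complete ℂ _
  have hρ : spectralRadius ℂ (A.map (algebraMap ℝ ℂ)) < 1 := by
    simpa using spectrum.spectralRadius_lt_of_forall_lt (r := 1) _ fun z hz => by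
      exact_mod_cast hA z hz
  have hre := ((continuous_id.matrix_map Complex.continuous_re).tendsto 0).comp
    (tendsto_pow_atTop_nhds_zero_of_spectralRadius_lt_one hρ)
  refine (hre.congr fun t => ?_).trans_eq (by simp)
  rw [Function.comp_apply, ← RingHom.mapMatrix_apply, ← map_pow]
  ext i j
  simp

end LinftyOpNorm

theorem IsSchur.tendsto_pow_mulVec {n : ℕ} {A : Matrix (Fin n) (Fin n) ℝ} (hA : IsSchur A)
    (v : Fin n → ℝ) : Tendsto (fun t => A ^ t *ᵥ v) atTop (𝓝 0) := by
  simpa [Function.comp_def] using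
    ((continuous_id.matrix_mulVec (continuous_const (y := v))).tendsto 0).comp hA.tendsto_pow

theorem mulVec_pow_sub_of_trajectories {ι R : Type*} [Fintype ι] [DecidableEq ι] [Ring R]
    (A : Matrix ι ι R) (b x x' : ℕ → ι → R) (hx : ∀ t, x (t + 1) = A *ᵥ x t + b t)
    (hx' : ∀ t, x' (t + 1) = A *ᵥ x' t + b t) (t : ℕ) :
    x t - x' t = A ^ t *ᵥ (x 0 - x' 0) := by
  induction t with
  | zero => simp
  | succ t ih => rw [hx, hx', add_sub_add_right_eq_sub, ← mulVec_sub, ih, mulVec_mulVec, pow_succ']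

section PersistentExcitation

variable {ι : Type} [Fintype ι]

theorem dotProduct_gramSum_mulVec (w : ℕ → ι → ℝ) (t T : ℕ) (v : ι → ℝ) :
    v ⬝ᵥ (gramSum w t T *ᵥ v) = ∑ τ ∈ Finset.Icc t (t + T), (w τ ⬝ᵥ v) ^ 2 := by
  simp [gramSum, sum_mulVec, vecMulVec_mulVec, dotProduct_comm v, sum_dotProduct, sq]

theorem posSemidef_gramSum (w : ℕ → ι → ℝ) (t T : ℕ) : (gramSum w t T).PosSemidef :=
  posSemidef_sum _ fun τ _ => by simpa using posSemidef_vecMulVec_self_star (w τ)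

theorem sq_dotProduct_le_dotProduct_self_mul (a v : ι → ℝ) :
    (a ⬝ᵥ v) ^ 2 ≤ (a ⬝ᵥ a) * (v ⬝ᵥ v) := by
  simpa only [dotProduct, sq] using Finset.sum_mul_sq_le_sq_mul_sq Finset.univ a v

variable [DecidableEq ι]

theorem posSemidef_gramSum_sub_smul_one_iff (w : ℕ → ι → ℝ) (t T : ℕ) (α : ℝ) :
    (gramSum w t T - α • 1).PosSemidef ↔
      ∀ v, α * (v ⬝ᵥ v) ≤ ∑ τ ∈ Finset.Icc t (t + T), (w τ ⬝ᵥ v) ^ 2 := by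
  rw [posSemidef_iff_dotProduct_mulVec,
    and_iff_right ((posSemidef_gramSum w t T).isHermitian.sub (isHermitian_one.smul (.all α)))]
  simp only [star_trivial, sub_mulVec, dotProduct_sub, smul_mulVec, one_mulVec, dotProduct_smul,
    smul_eq_mul, dotProduct_gramSum_mulVec, sub_nonneg]

theorem isPE_iff_forall_dotProduct (w : ℕ → ι → ℝ) :
    IsPE w ↔ ∃ α : ℝ, 0 < α ∧ ∃ T : ℕ, 0 < T ∧
      ∀ t v, α * (v ⬝ᵥ v) ≤ ∑ τ ∈ Finset.Icc t (t + T), (w τ ⬝ᵥ v) ^ 2 := by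
  simp only [IsPE, posSemidef_gramSum_sub_smul_one_iff]

theorem IsPE.of_tendsto_sub {w w' : ℕ → ι → ℝ} (hw : IsPE w)
    (hd : Tendsto (fun t => w t - w' t) atTop (𝓝 0)) : IsPE w' := by
  obtain ⟨α, hα, T, hT, hPE⟩ := (isPE_iff_forall_dotProduct w).mp hw
  set ε := α / (4 * (T + 1))
  have hε : 0 < ε := by positivity
  have hsmall : ∀ᶠ τ in atTop, (w τ - w' τ) ⬝ᵥ (w τ - w' τ) < ε := by
    have := ((continuous_id.dotProduct continuous_id).tendsto 0).comp hd
    exact this.eventually_lt_const (by simpa using hε)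
  obtain ⟨N, hN⟩ := eventually_atTop.mp hsmall
  refine (isPE_iff_forall_dotProduct w').mpr ⟨α / 4, by positivity, N + T, by omega, fun t v => ?_⟩
  set s := max t N
  have hwindow : ∑ τ ∈ Finset.Icc s (s + T), (w' τ ⬝ᵥ v) ^ 2 ≤
      ∑ τ ∈ Finset.Icc t (t + (N + T)), (w' τ ⬝ᵥ v) ^ 2 :=
    Finset.sum_le_sum_of_subset_of_nonneg (Finset.Icc_subset_Icc (le_max_left t N) (by omega))
      fun _ _ _ => sq_nonneg _
  have hdiff : ∑ τ ∈ Finset.Icc s (s + T), ((w τ - w' τ) ⬝ᵥ v) ^ 2 ≤ α / 4 * (v ⬝ᵥ v) := by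
    calc ∑ τ ∈ Finset.Icc s (s + T), ((w τ - w' τ) ⬝ᵥ v) ^ 2
        ≤ ∑ τ ∈ Finset.Icc s (s + T), ε * (v ⬝ᵥ v) := by
          refine Finset.sum_le_sum fun τ hτ => ?_
          refine (sq_dotProduct_le_dotProduct_self_mul _ v).trans ?_
          gcongr
          · exact Finset.sum_nonneg fun i _ => mul_self_nonneg (v i)
          · exact (hN τ (le_trans (le_max_right t N) (Finset.mem_Icc.mp hτ).1)).le
      _ = α / 4 * (v ⬝ᵥ v) := by
          rw [Finset.sum_const, Nat.card_Icc, show s + T + 1 - s = T + 1 by omega, nsmul_eq_mul]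
          simp only [ε]
          push_cast
          field_simp
  have hsplit : ∑ τ ∈ Finset.Icc s (s + T), (w τ ⬝ᵥ v) ^ 2 ≤
      2 * ∑ τ ∈ Finset.Icc s (s + T), (w' τ ⬝ᵥ v) ^ 2 +
        2 * ∑ τ ∈ Finset.Icc s (s + T), ((w τ - w' τ) ⬝ᵥ v) ^ 2 := by
    rw [Finset.mul_sum, Finset.mul_sum, ← Finset.sum_add_distrib]
    gcongr with τ
    rw [sub_dotProduct]
    nlinarith [sq_nonneg (w τ ⬝ᵥ v - 2 * (w' τ ⬝ᵥ v))]
  linarith [hPE s v]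

end PersistentExcitation

theorem pe_state_initial_condition_independent_general {n m : ℕ}
    (A : Matrix (Fin n) (Fin n) ℝ) (B : Matrix (Fin n) (Fin m) ℝ) (hA : IsSchur A)
    (u : ℕ → Fin m → ℝ)
    (x x' : ℕ → Fin n → ℝ)
    (hdyn : ∀ t : ℕ, x (t + 1) = A.mulVec (x t) + B.mulVec (u t))
    (hdyn' : ∀ t : ℕ, x' (t + 1) = A.mulVec (x' t) + B.mulVec (u t)) :
    IsPE x ↔ IsPE x' := by
  have hdiff : Tendsto (fun t => x t - x' t) atTop (𝓝 0) := by
    rw [funext (mulVec_pow_sub_of_trajectories A _ x x' hdyn hdyn')]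
    exact hA.tendsto_pow_mulVec _
  exact ⟨fun h => h.of_tendsto_sub hdiff,
    fun h => h.of_tendsto_sub (by simpa using hdiff.neg)⟩

/-- for a Schur system, PE of the state trajectory is independent of the
initial condition. -/
theorem pe_state_initial_condition_independent {n m : ℕ}
    (A : Matrix (Fin n) (Fin n) ℝ) (B : Matrix (Fin n) (Fin m) ℝ) (hA : IsSchur A)
    (u : ℕ → Fin m → ℝ) (hu : ∃ M : ℝ, ∀ t, ‖u t‖ ≤ M)
    (x x' : ℕ → Fin n → ℝ) (x0 x0' : Fin n → ℝ)
    (hx0 : x 0 = x0) (hx0' : x' 0 = x0')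
    (hdyn : ∀ t : ℕ, x (t + 1) = A.mulVec (x t) + B.mulVec (u t))
    (hdyn' : ∀ t : ℕ, x' (t + 1) = A.mulVec (x' t) + B.mulVec (u t)) :
    IsPE x ↔ IsPE x' :=
  pe_state_initial_condition_independent_general A B hA u x x' hdyn hdyn'
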